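/- Let σ = conv{x_1,…,x_{d+1}} ⊂ ℝ^d be a d-dimensional simplex (the points x_1,…,x_{d+1} are affinely independent). Then for every t ∈ ℝ^d satisfying ⟨x_k, t⟩ < 1 for all k = 1,…,d+1, one has ∫_σ (1 − ⟨x, t⟩)^{−(d+1)} λ(dx) = λ(σ) / ∏_{k=1}^{d+1} (1 − ⟨x_k, t⟩), where λ denotes d-dimensional Lebesgue measure and ⟨·,·⟩ the standard inner product on ℝ^d. -/

import Mathlib

/-!
The projective map `y ↦ y / (1 - ⟨y, t⟩)` is injective on the half-space `⟨y, t⟩ < 1`, has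
Jacobian determinant `(1 - ⟨y, t⟩)^{-(d+1)}` there, and maps the simplex `σ` onto the simplex
with vertices `x_k / (1 - ⟨x_k, t⟩)`. By change of variables the integral is the volume of that
image simplex. Volumes of simplices are proportional to the determinant of the vertices lifted to
`(x_k, 1)`; a unimodular column operation turns these into `(x_k, 1 - ⟨x_k, t⟩)`, i.e. the lifted
image vertices scaled by `1 - ⟨x_k, t⟩`, so the image has volume `λ(σ) / ∏ (1 - ⟨x_k, t⟩)`.
-/

open MeasureTheory Set Matrix Module Pointwise

lemma LinearMap.det_id_add_smulRight {R M : Type*} [CommRing R] [AddCommGroup M] [Module R M]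
    [Module.Free R M] [Module.Finite R M] (f : M →ₗ[R] R) (u : M) :
    (LinearMap.id + f.smulRight u).det = 1 + f u := by
  classical
  let b := Module.Free.chooseBasis R M
  have hmat : LinearMap.toMatrix b b (LinearMap.id + f.smulRight u)
      = 1 + replicateCol Unit (b.repr u) * replicateRow Unit (fun j => f (b j)) := by
    ext i j
    simp [LinearMap.toMatrix_apply, one_apply, Finsupp.single_apply, mul_apply, eq_comm,
      mul_comm]
  rw [← LinearMap.det_toMatrix b, hmat, det_one_add_replicateCol_mul_replicateRow]
  conv_rhs => rw [← b.sum_repr u]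
  simp only [dotProduct, map_sum, map_smul, smul_eq_mul, mul_comm]

section ProjectiveMap

variable {E : Type*} [AddCommGroup E] [Module ℝ E]

noncomputable def projectiveMap (ℓ : E →ₗ[ℝ] ℝ) (y : E) : E := (1 - ℓ y)⁻¹ • y

variable (ℓ : E →ₗ[ℝ] ℝ)

lemma one_add_apply_projectiveMap {y : E} (hy : ℓ y ≠ 1) :
    1 + ℓ (projectiveMap ℓ y) = (1 - ℓ y)⁻¹ := by
  have : 1 - ℓ y ≠ 0 := sub_ne_zero.2 hy.symm
  rw [projectiveMap, map_smul, smul_eq_mul]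
  field_simp
  ring

lemma projectiveMap_neg_projectiveMap {y : E} (hy : ℓ y ≠ 1) :
    projectiveMap (-ℓ) (projectiveMap ℓ y) = y := by
  have : 1 - ℓ y ≠ 0 := sub_ne_zero.2 hy.symm
  rw [projectiveMap, LinearMap.neg_apply, sub_neg_eq_add, one_add_apply_projectiveMap ℓ hy,
    inv_inv, projectiveMap, smul_inv_smul₀ this]

lemma neg_apply_projectiveMap_lt_one {y : E} (hy : ℓ y < 1) :
    (-ℓ) (projectiveMap ℓ y) < 1 := by
  have h := one_add_apply_projectiveMap ℓ hy.ne
  have : 0 < (1 - ℓ y)⁻¹ := inv_pos.2 (sub_pos.2 hy)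
  rw [LinearMap.neg_apply]
  linarith

lemma injOn_projectiveMap : InjOn (projectiveMap ℓ) {y | ℓ y < 1} :=
  LeftInvOn.injOn fun _ hy => projectiveMap_neg_projectiveMap ℓ (ne_of_lt hy)

lemma convexHull_subset_setOf_lt {s : Set E} (hs : s ⊆ {y | ℓ y < 1}) :
    convexHull ℝ s ⊆ {y | ℓ y < 1} :=
  convexHull_min hs (convex_halfSpace_lt ℓ.isLinear 1)

/-- The convex weights `w i` of points `z i` become the weights `w i * (1 - ℓ (z i))`,
renormalised, of the points `projectiveMap ℓ (z i)`. -/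
lemma projectiveMap_image_convexHull_subset {s : Set E} (hs : s ⊆ {y | ℓ y < 1}) :
    projectiveMap ℓ '' convexHull ℝ s ⊆ convexHull ℝ (projectiveMap ℓ '' s) := by
  rintro _ ⟨y, hy, rfl⟩
  have hyℓ := convexHull_subset_setOf_lt ℓ hs hy
  obtain ⟨ι, _, w, z, hw0, hw1, hz, rfl⟩ := mem_convexHull_iff_exists_fintype.1 hy
  have hza : ∀ i, 0 < 1 - ℓ (z i) := fun i => sub_pos.2 (hs (hz i))
  have hsum : ∑ i, w i * (1 - ℓ (z i)) = 1 - ℓ (∑ i, w i • z i) := by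
    simp [mul_sub, Finset.sum_sub_distrib, hw1]
  have hcm : Finset.univ.centerMass (fun i => w i * (1 - ℓ (z i))) (fun i => projectiveMap ℓ (z i))
      = projectiveMap ℓ (∑ i, w i • z i) := by
    rw [Finset.centerMass, hsum, projectiveMap]
    congr 1
    refine Finset.sum_congr rfl fun i _ => ?_
    rw [projectiveMap, smul_smul, mul_assoc, mul_inv_cancel₀ (hza i).ne', mul_one]
  rw [← hcm]
  refine Finset.univ.centerMass_mem_convexHull (fun i _ => mul_nonneg (hw0 i) (hza i).le) ?_
    (fun i _ => mem_image_of_mem _ (hz i))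
  rw [hsum]
  exact sub_pos.2 hyℓ

/-- The reverse inclusion is the same statement for the inverse map `projectiveMap (-ℓ)`. -/
lemma projectiveMap_image_convexHull {s : Set E} (hs : s ⊆ {y | ℓ y < 1}) :
    projectiveMap ℓ '' convexHull ℝ s = convexHull ℝ (projectiveMap ℓ '' s) := by
  refine (projectiveMap_image_convexHull_subset ℓ hs).antisymm fun z hz => ?_
  have hs' : projectiveMap ℓ '' s ⊆ {z | (-ℓ) z < 1} := by
    rintro _ ⟨y, hy, rfl⟩
    exact neg_apply_projectiveMap_lt_one ℓ (hs hy)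
  have hback : projectiveMap (-ℓ) '' (projectiveMap ℓ '' s) = s :=
    LeftInvOn.image_image fun y hy => projectiveMap_neg_projectiveMap ℓ (hs hy).ne
  have hz' := convexHull_subset_setOf_lt (-ℓ) hs' hz
  refine ⟨projectiveMap (-ℓ) z, ?_, ?_⟩
  · rw [← hback]
    exact projectiveMap_image_convexHull_subset (-ℓ) hs' (mem_image_of_mem _ hz)
  · simpa using projectiveMap_neg_projectiveMap (-ℓ) hz'.ne

noncomputable def projectiveMapDeriv (y : E) : E →ₗ[ℝ] E :=
  (1 - ℓ y)⁻¹ • (LinearMap.id + ((1 - ℓ y)⁻¹ • ℓ).smulRight y)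

lemma det_projectiveMapDeriv [FiniteDimensional ℝ E] {y : E} (hy : ℓ y ≠ 1) :
    (projectiveMapDeriv ℓ y).det = ((1 - ℓ y) ^ (finrank ℝ E + 1))⁻¹ := by
  have : 1 - ℓ y ≠ 0 := sub_ne_zero.2 hy.symm
  rw [projectiveMapDeriv, LinearMap.det_smul, LinearMap.det_id_add_smulRight]
  simp
  field_simp
  ring

end ProjectiveMap

section ChangeOfVariables

variable {E : Type*} [NormedAddCommGroup E] [NormedSpace ℝ E] [FiniteDimensional ℝ E]
  (ℓ : E →ₗ[ℝ] ℝ)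

lemma hasFDerivAt_projectiveMap {y : E} (hy : ℓ y ≠ 1) :
    HasFDerivAt (projectiveMap ℓ) (projectiveMapDeriv ℓ y).toContinuousLinearMap y := by
  have hden : HasFDerivAt (fun u => 1 - ℓ u) (-ℓ.toContinuousLinearMap) y :=
    ℓ.toContinuousLinearMap.hasFDerivAt.const_sub 1
  have hinv := (hasDerivAt_inv (sub_ne_zero.2 hy.symm)).comp_hasFDerivAt y hden
  convert hinv.smul (hasFDerivAt_id y) using 1
  · ext v
    simp [projectiveMap]
  · ext v
    simp [projectiveMapDeriv, smul_smul]
    field_simp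

theorem setIntegral_inv_one_sub_pow_eq_measureReal_image [MeasurableSpace E] [BorelSpace E]
    (μ : Measure E) [μ.IsAddHaarMeasure] {s : Set E} (hs : MeasurableSet s)
    (hsℓ : s ⊆ {y | ℓ y < 1}) :
    ∫ y in s, ((1 - ℓ y) ^ (finrank ℝ E + 1))⁻¹ ∂μ = μ.real (projectiveMap ℓ '' s) := by
  have h := integral_image_eq_integral_abs_det_fderiv_smul μ hs
    (fun y hy => (hasFDerivAt_projectiveMap ℓ (hsℓ hy).ne).hasFDerivWithinAt)
    ((injOn_projectiveMap ℓ).mono hsℓ) fun _ => (1 : ℝ)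
  rw [setIntegral_const, smul_eq_mul, mul_one] at h
  rw [h]
  refine setIntegral_congr_fun hs fun y hy => ?_
  have hpos : 0 < 1 - ℓ y := sub_pos.2 (hsℓ hy)
  rw [ContinuousLinearMap.det, LinearMap.coe_toContinuousLinearMap,
    det_projectiveMapDeriv ℓ (hsℓ hy).ne, smul_eq_mul, mul_one, abs_of_pos (by positivity)]

end ChangeOfVariables
namespace Simplex

variable {d : ℕ}

noncomputable def cornerVertices (d : ℕ) : Fin (d + 1) → Fin d → ℝ :=
  Fin.cons 0 fun j => Pi.single j 1

def edgeMatrix (z : Fin (d + 1) → Fin d → ℝ) : Matrix (Fin d) (Fin d) ℝ :=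
  of fun i k => z k.succ i - z 0 i

lemma eq_add_edgeMatrix_mulVec (z : Fin (d + 1) → Fin d → ℝ) (k : Fin (d + 1)) :
    z k = z 0 + edgeMatrix z *ᵥ cornerVertices d k := by
  induction k using Fin.cases with
  | zero => simp [cornerVertices]
  | succ j =>
    ext i
    simp [cornerVertices, edgeMatrix]

lemma volume_convexHull_range (z : Fin (d + 1) → Fin d → ℝ) :
    volume (convexHull ℝ (range z))
      = ENNReal.ofReal |(edgeMatrix z).det|
        * volume (convexHull ℝ (range (cornerVertices d))) := by
  have hz : range z = z 0 +ᵥ toLin' (edgeMatrix z) '' range (cornerVertices d) := by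
    rw [← range_comp, vadd_set_range]
    exact congrArg range (funext (eq_add_edgeMatrix_mulVec z))
  rw [hz, convexHull_vadd, ← LinearMap.image_convexHull, measure_vadd,
    Measure.addHaar_image_linearMap, LinearMap.det_toLin']

/-- The vertices `z k` lifted to `(z k, 1) ∈ ℝ^d × ℝ`, as the rows of a square matrix: row `inr ()`
belongs to `z 0`, row `inl k` to `z k.succ`. -/
def liftedMatrix (z : Fin (d + 1) → Fin d → ℝ) : Matrix (Fin d ⊕ Unit) (Fin d ⊕ Unit) ℝ :=
  fromBlocks (of fun k j => z k.succ j) (of fun _ _ => 1) (of fun _ j => z 0 j) 1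

lemma det_liftedMatrix (z : Fin (d + 1) → Fin d → ℝ) :
    (liftedMatrix z).det = (edgeMatrix z).det := by
  rw [liftedMatrix, det_fromBlocks_one₂₂, ← det_transpose]
  congr 1
  ext i k
  simp [edgeMatrix, mul_apply]

/-- The right factor on the left is a unimodular column operation turning the last column `1`
into `1 - ⟨x k, t⟩`. -/
lemma liftedMatrix_mul_eq (x : Fin (d + 1) → Fin d → ℝ) (t : Fin d → ℝ)
    (hx : ∀ k, x k ⬝ᵥ t ≠ 1) :
    liftedMatrix x * fromBlocks 1 (of fun j _ => -t j) 0 1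
      = diagonal (Sum.elim (fun k => 1 - x k.succ ⬝ᵥ t) fun _ => 1 - x 0 ⬝ᵥ t)
        * liftedMatrix (fun k => (1 - x k ⬝ᵥ t)⁻¹ • x k) := by
  have ha : ∀ k, 1 - x k ⬝ᵥ t ≠ 0 := fun k => sub_ne_zero.2 (hx k).symm
  rw [liftedMatrix, fromBlocks_multiply]
  ext (k | k) (j | j)
  all_goals
    rw [diagonal_mul]
    simp [liftedMatrix, mul_apply, ha]
  all_goals exact neg_add_eq_sub _ _

lemma det_edgeMatrix_smul (x : Fin (d + 1) → Fin d → ℝ) (t : Fin d → ℝ)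
    (hx : ∀ k, x k ⬝ᵥ t ≠ 1) :
    (edgeMatrix fun k => (1 - x k ⬝ᵥ t)⁻¹ • x k).det
      = (∏ k, (1 - x k ⬝ᵥ t))⁻¹ * (edgeMatrix x).det := by
  have hprod : ∏ k, (1 - x k ⬝ᵥ t) ≠ 0 :=
    Finset.prod_ne_zero_iff.2 fun k _ => sub_ne_zero.2 (hx k).symm
  have h := congrArg det (liftedMatrix_mul_eq x t hx)
  rw [det_mul, det_mul, det_fromBlocks_zero₂₁, det_one, det_one, mul_one, mul_one, det_diagonal,
    Fintype.prod_sum_type, det_liftedMatrix, det_liftedMatrix] at h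
  simp only [Sum.elim_inl, Sum.elim_inr, Finset.univ_unique, Finset.prod_singleton] at h
  rw [mul_comm _ (1 - x 0 ⬝ᵥ t), ← Fin.prod_univ_succ fun k => 1 - x k ⬝ᵥ t] at h
  rw [h, inv_mul_cancel_left₀ hprod]

lemma volume_convexHull_smul (x : Fin (d + 1) → Fin d → ℝ) (t : Fin d → ℝ)
    (hx : ∀ k, x k ⬝ᵥ t < 1) :
    volume (convexHull ℝ (range fun k => (1 - x k ⬝ᵥ t)⁻¹ • x k))
      = ENNReal.ofReal (∏ k, (1 - x k ⬝ᵥ t))⁻¹ * volume (convexHull ℝ (range x)) := by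
  have hprod : 0 < (∏ k, (1 - x k ⬝ᵥ t))⁻¹ :=
    inv_pos.2 (Finset.prod_pos fun k _ => sub_pos.2 (hx k))
  rw [volume_convexHull_range, volume_convexHull_range x,
    det_edgeMatrix_smul x t fun k => (hx k).ne, abs_mul, abs_of_pos hprod, ENNReal.ofReal_mul hprod.le, mul_assoc]

end Simplex

theorem stmt_0_general (d : ℕ) (x : Fin (d + 1) → (Fin d → ℝ))
    (t : Fin d → ℝ) (ht : ∀ k, ∑ i, x k i * t i < 1) :
    ∫ y in convexHull ℝ (Set.range x), ((1 - ∑ i, y i * t i) ^ (d + 1))⁻¹ ∂volume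
      = (volume (convexHull ℝ (Set.range x))).toReal / ∏ k, (1 - ∑ i, x k i * t i) := by
  let ℓ : (Fin d → ℝ) →ₗ[ℝ] ℝ := (dotProductBilin ℝ ℝ).flip t
  have hvert : range x ⊆ {y | ℓ y < 1} := range_subset_iff.2 ht
  have hσ : MeasurableSet (convexHull ℝ (range x)) :=
    ((finite_range x).isCompact_convexHull (𝕜 := ℝ)).isClosed.measurableSet
  have himage : projectiveMap ℓ '' convexHull ℝ (range x)
      = convexHull ℝ (range fun k => (1 - x k ⬝ᵥ t)⁻¹ • x k) := by
    rw [projectiveMap_image_convexHull ℓ hvert, ← range_comp]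
    rfl
  have hprod : 0 ≤ (∏ k, (1 - x k ⬝ᵥ t))⁻¹ :=
    inv_nonneg.2 (Finset.prod_nonneg fun k _ => (sub_pos.2 (ht k)).le)
  have h := setIntegral_inv_one_sub_pow_eq_measureReal_image ℓ volume hσ
    (convexHull_subset_setOf_lt ℓ hvert)
  rw [finrank_fin_fun, himage, measureReal_def, Simplex.volume_convexHull_smul x t ht,
    ENNReal.toReal_mul, ENNReal.toReal_ofReal hprod, inv_mul_eq_div] at h
  exact h

/-- For a `d`-dimensional simplex `σ = conv{x_1, …, x_{d+1}} ⊆ ℝ^d`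
(the `x_k` affinely independent) and any `t ∈ ℝ^d` with `⟨x_k, t⟩ < 1` for every vertex,
`∫_σ (1 − ⟨x, t⟩)^{−(d+1)} dλ(x) = λ(σ) / ∏_{k} (1 − ⟨x_k, t⟩)`. -/
theorem stmt_0 (d : ℕ) (x : Fin (d + 1) → (Fin d → ℝ))
    (hx : AffineIndependent ℝ x)
    (t : Fin d → ℝ) (ht : ∀ k, ∑ i, x k i * t i < 1) :
    ∫ y in convexHull ℝ (Set.range x), ((1 - ∑ i, y i * t i) ^ (d + 1))⁻¹ ∂volume
      = (volume (convexHull ℝ (Set.range x))).toReal / ∏ k, (1 - ∑ i, x k i * t i) :=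
  stmt_0_general d x t ht
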